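/- For every source s ∈ V and every vertex x ∈ V with x ≠ s, the dependency of s on x satisfies the recursion δ_{s•}(x) = Σ_{w : x ∈ P_s(w)} (σ_{sx} / σ_{sw}) · (1 + δ_{s•}(w)). -/

import Mathlib

/-!
Positive weights make shortest paths simple, so a shortest `s`-`t` path through `x ≠ t` leaves
`x` along exactly one edge `(x,u)`, and that edge lies in the shortest-path DAG. Cutting a
shortest path at `u` is a bijection between the shortest `s`-`t` paths through `u` and the pairs
(shortest `s`-`u` path, shortest continuation from `u` to `t`). Hence, with `c(u,t)` the number
of continuations, `σ_{st}(x,u) = σ_{sx} c(u,t)` and `σ_{st}(u) = σ_{su} c(u,t)`, so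
`σ_{st}(x,u) = (σ_{sx} / σ_{su}) σ_{st}(u)`. Summing `σ_{st}(x,u) / σ_{st}` over `u` and `t`
gives the recursion; the term `t = u` contributes the `1`.
-/

open scoped ENNReal

namespace BC

variable {V : Type*}

/-- `p` is a path from `s` to `t` in the weighted digraph with weight function `w`;
an edge is present iff its weight is not `⊤`. -/
def IsPath (w : V → V → ℝ≥0∞) (s t : V) (p : List V) : Prop :=
  p ≠ [] ∧ p.head? = some s ∧ p.getLast? = some t ∧ p.Chain' (fun a b => w a b ≠ ⊤)

/-- The weight of a path: the sum of the weights of its consecutive edges. -/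
noncomputable def pWeight (w : V → V → ℝ≥0∞) (p : List V) : ℝ≥0∞ :=
  ((p.zip p.tail).map fun e => w e.1 e.2).sum

/-- The shortest-path distance `d(s,t)` (equal to `⊤` if no path exists). -/
noncomputable def dist (w : V → V → ℝ≥0∞) (s t : V) : ℝ≥0∞ :=
  ⨅ p ∈ {p | IsPath w s t p}, pWeight w p

/-- `p` is a shortest path from `s` to `t`. -/
def IsShortest (w : V → V → ℝ≥0∞) (s t : V) (p : List V) : Prop :=
  IsPath w s t p ∧ pWeight w p = dist w s t

/-- `σ_{st}`: the number of shortest paths from `s` to `t`. -/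
noncomputable def nsp (w : V → V → ℝ≥0∞) (s t : V) : ℕ :=
  Set.ncard {p | IsShortest w s t p}

/-- `σ_{st}(x)`: the number of shortest paths from `s` to `t` passing through `x`. -/
noncomputable def nspVia (w : V → V → ℝ≥0∞) (s t x : V) : ℕ :=
  Set.ncard {p | IsShortest w s t p ∧ x ∈ p}

/-- The directed edge `(a,b)` lies on the path `p`. -/
def edgeOn (p : List V) (a b : V) : Prop := (a, b) ∈ p.zip p.tail

/-- The shortest-path DAG rooted at `s`: the edges lying on shortest paths from `s`. -/
def dagSet (w : V → V → ℝ≥0∞) (s : V) : Set (V × V) :=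
  {e | w e.1 e.2 ≠ ⊤ ∧ dist w s e.1 ≠ ⊤ ∧ dist w s e.1 + w e.1 e.2 = dist w s e.2}

/- The dependency `δ_{s•}(x) = Σ_{t ∈ V \ {x,s}} σ_{st}(x)/σ_{st}`
(with the convention that a pair dependency is 0 when `σ_{st} = 0`,
which agrees with division by zero in Lean). -/
open Classical in
noncomputable def dep [Fintype V] (w : V → V → ℝ≥0∞) (s x : V) : ℝ :=
  ∑ t : V, if t ≠ x ∧ t ≠ s then (nspVia w s t x : ℝ) / (nsp w s t : ℝ) else 0

section Paths

variable {w : V → V → ℝ≥0∞} {s t u a b : V} {p q l m : List V}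

@[simp] lemma pWeight_singleton : pWeight w [a] = 0 := rfl

@[simp] lemma pWeight_cons_cons : pWeight w (a :: b :: l) = w a b + pWeight w (b :: l) := by
  simp [pWeight]

lemma pWeight_append_cons :
    pWeight w (l ++ u :: m) = pWeight w (l ++ [u]) + pWeight w (u :: m) := by
  induction l with
  | nil => simp
  | cons a l ih => cases l <;> simp_all [add_assoc]

lemma pWeight_ne_top_of_isChain (h : p.IsChain fun a b => w a b ≠ ⊤) : pWeight w p ≠ ⊤ := by
  induction h with
  | nil => simp [pWeight]
  | singleton => simp
  | cons_cons hab _ ih => simpa using ⟨hab, ih⟩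

lemma pWeight_cons_cons_pos (hpos : ∀ a b, 0 < w a b) : 0 < pWeight w (a :: b :: l) := by
  simpa using Or.inl (hpos a b)

lemma IsPath.pWeight_ne_top (h : IsPath w s t p) : pWeight w p ≠ ⊤ :=
  pWeight_ne_top_of_isChain h.2.2.2

lemma IsPath.eq_cons (h : IsPath w s t p) : ∃ l, p = s :: l :=
  List.head?_eq_some_iff.mp h.2.1

lemma IsPath.eq_concat (h : IsPath w s t p) : ∃ l, p = l ++ [t] :=
  List.getLast?_eq_some_iff.mp h.2.2.1

lemma isPath_pair_iff : IsPath w a b [a, b] ↔ w a b ≠ ⊤ := by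
  simp [IsPath, List.Chain']

lemma isPath_append_cons_iff :
    IsPath w s t (l ++ u :: m) ↔ IsPath w s u (l ++ [u]) ∧ IsPath w u t (u :: m) := by
  unfold IsPath List.Chain'
  rw [List.isChain_split]
  simp [List.head?_append, List.getLast?_append]
  tauto

lemma dist_le_pWeight (h : IsPath w s t p) : dist w s t ≤ pWeight w p :=
  iInf₂_le p h

lemma dist_self : dist w s s = 0 :=
  nonpos_iff_eq_zero.1 (dist_le_pWeight (p := [s]) ⟨by simp, rfl, rfl, .singleton s⟩)

lemma IsPath.dist_ne_top (h : IsPath w s t p) : dist w s t ≠ ⊤ :=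
  ne_top_of_le_ne_top h.pWeight_ne_top (dist_le_pWeight h)

lemma dist_le_dist_add_pWeight (hq : IsPath w u t q) : dist w s t ≤ dist w s u + pWeight w q := by
  obtain ⟨m, rfl⟩ := hq.eq_cons
  simp only [dist, ENNReal.iInf_add]
  refine le_iInf₂ fun r hr => ?_
  obtain ⟨l, rfl⟩ := hr.eq_concat
  rw [← pWeight_append_cons]
  exact dist_le_pWeight (isPath_append_cons_iff.2 ⟨hr, hq⟩)

end Paths

/-- The continuations `q` from `u` to `t` that extend every shortest `s`-`u` path to a shortest
`s`-`t` path. -/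
def shortestSuffixes (w : V → V → ℝ≥0∞) (s u t : V) : Set (List V) :=
  {q | IsPath w u t q ∧ dist w s u + pWeight w q = dist w s t}

/-- `σ_{st}(a,b)`: the number of shortest paths from `s` to `t` using the edge `(a,b)`. -/
noncomputable def nspViaEdge (w : V → V → ℝ≥0∞) (s t a b : V) : ℕ :=
  Set.ncard {p | IsShortest w s t p ∧ edgeOn p a b}

section Shortest

variable {w : V → V → ℝ≥0∞} {s t u a b : V} {p l m : List V}

lemma isShortest_append_cons_iff :
    IsShortest w s t (l ++ u :: m) ↔
      IsShortest w s u (l ++ [u]) ∧ u :: m ∈ shortestSuffixes w s u t := by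
  simp only [IsShortest, shortestSuffixes, Set.mem_ofPred_eq]
  rw [isPath_append_cons_iff, pWeight_append_cons]
  constructor
  · rintro ⟨⟨hl, hm⟩, hw⟩
    have hle : pWeight w (l ++ [u]) + pWeight w (u :: m) ≤ dist w s u + pWeight w (u :: m) :=
      hw ▸ dist_le_dist_add_pWeight hm
    have hl' : pWeight w (l ++ [u]) = dist w s u :=
      le_antisymm ((ENNReal.add_le_add_iff_right hm.pWeight_ne_top).1 hle) (dist_le_pWeight hl)
    exact ⟨⟨hl, hl'⟩, hm, hl' ▸ hw⟩
  · rintro ⟨⟨hl, hl'⟩, hm, hw⟩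
    exact ⟨⟨hl, hm⟩, hl' ▸ hw⟩

lemma IsShortest.dist_le_of_mem (hp : IsShortest w s t p) (hu : u ∈ p) :
    dist w s u ≤ dist w s t := by
  obtain ⟨l, m, rfl⟩ := List.append_of_mem hu
  exact (isShortest_append_cons_iff.1 hp).2.2 ▸ le_self_add

lemma edgeOn_iff : edgeOn p a b ↔ ∃ l m, p = l ++ a :: b :: m := by
  induction p with
  | nil => simp [edgeOn]
  | cons c p ih =>
    cases p with
    | nil => simp [edgeOn, List.cons_eq_append_iff]
    | cons d p =>
      simp only [edgeOn, List.tail_cons, List.zip_cons_cons, List.mem_cons] at ih ⊢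
      rw [ih]
      constructor
      · rintro (h | ⟨l, m, h⟩)
        · obtain ⟨rfl, rfl⟩ := Prod.ext_iff.1 h
          exact ⟨[], p, rfl⟩
        · exact ⟨c :: l, m, by simp [h]⟩
      · rintro ⟨_ | ⟨e, l⟩, m, h⟩
        · simp_all
        · simp only [List.cons_append, List.cons.injEq] at h
          exact Or.inr ⟨l, m, h.2⟩

lemma mem_dagSet_of_edgeOn (hp : IsShortest w s t p) (h : edgeOn p a b) : (a, b) ∈ dagSet w s := by
  obtain ⟨l, m, rfl⟩ := edgeOn_iff.1 h
  rw [← List.singleton_append, ← List.append_assoc, isShortest_append_cons_iff] at hp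
  rw [List.append_assoc, List.singleton_append, isShortest_append_cons_iff] at hp
  obtain ⟨⟨hpath, -⟩, hab, hd⟩ := hp.1
  exact ⟨isPath_pair_iff.1 hab, hpath.dist_ne_top, by simpa using hd⟩

end Shortest

section Simple

variable {w : V → V → ℝ≥0∞} {s t a : V} {p l c m : List V}

lemma IsPath.shortcut (hpos : ∀ a b, 0 < w a b) (h : IsPath w s t (l ++ a :: (c ++ a :: m))) :
    IsPath w s t (l ++ a :: m) ∧
      pWeight w (l ++ a :: m) < pWeight w (l ++ a :: (c ++ a :: m)) := by
  obtain ⟨hl, hcm⟩ := isPath_append_cons_iff.1 h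
  rw [← List.cons_append, isPath_append_cons_iff] at hcm
  refine ⟨isPath_append_cons_iff.2 ⟨hl, hcm.2⟩, ?_⟩
  obtain ⟨b, r, hbr⟩ := List.exists_cons_of_ne_nil (List.concat_ne_nil a c)
  have hc : 0 < pWeight w (a :: c ++ [a]) := by
    rw [List.cons_append, hbr]
    exact pWeight_cons_cons_pos hpos
  have hsplit : pWeight w (l ++ a :: (c ++ a :: m))
      = pWeight w (l ++ [a]) + (pWeight w (a :: c ++ [a]) + pWeight w (a :: m)) := by
    rw [pWeight_append_cons, ← List.cons_append, pWeight_append_cons (l := a :: c)]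
  rw [hsplit, pWeight_append_cons]
  exact ENNReal.add_lt_add_left hl.pWeight_ne_top
    (add_comm (pWeight w (a :: c ++ [a])) _ ▸ ENNReal.lt_add_right hcm.2.pWeight_ne_top hc.ne')

lemma IsPath.exists_lt_of_not_nodup (hpos : ∀ a b, 0 < w a b) (h : IsPath w s t p)
    (hp : ¬p.Nodup) : ∃ q, IsPath w s t q ∧ pWeight w q < pWeight w p ∧ q.length < p.length := by
  obtain ⟨a, hsub⟩ := not_forall_not.1 (mt List.nodup_iff_sublist.2 hp)
  obtain ⟨r₁, r₂, rfl, ha₁, ha₂⟩ := List.cons_sublist_iff.1 hsub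
  obtain ⟨l₁, l₂, rfl⟩ := List.append_of_mem ha₁
  obtain ⟨l₃, l₄, rfl⟩ := List.append_of_mem (List.singleton_sublist.1 ha₂)
  have hp : l₁ ++ a :: l₂ ++ (l₃ ++ a :: l₄) = l₁ ++ a :: ((l₂ ++ l₃) ++ a :: l₄) := by simp
  rw [hp] at h ⊢
  exact ⟨_, (h.shortcut hpos).1, (h.shortcut hpos).2, by simp; omega⟩

lemma IsPath.exists_nodup_le (hpos : ∀ a b, 0 < w a b) (h : IsPath w s t p) :
    ∃ q, IsPath w s t q ∧ q.Nodup ∧ pWeight w q ≤ pWeight w p := by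
  induction hn : p.length using Nat.strong_induction_on generalizing p with
  | _ n ih =>
    by_cases hp : p.Nodup
    · exact ⟨p, h, hp, le_rfl⟩
    obtain ⟨q, hq, hlt, hlen⟩ := h.exists_lt_of_not_nodup hpos hp
    obtain ⟨r, hr, hrn, hle⟩ := ih _ (hn ▸ hlen) hq rfl
    exact ⟨r, hr, hrn, hle.trans hlt.le⟩

lemma IsShortest.nodup (hpos : ∀ a b, 0 < w a b) (h : IsShortest w s t p) : p.Nodup := by
  by_contra hp
  obtain ⟨q, hq, hlt, -⟩ := h.1.exists_lt_of_not_nodup hpos hp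
  exact (dist_le_pWeight hq).not_gt (h.2 ▸ hlt)

variable [Finite V]

lemma finite_setOf_isShortest (hpos : ∀ a b, 0 < w a b) : {p | IsShortest w s t p}.Finite := by
  have := Fintype.ofFinite V
  exact (List.finite_length_le V (Fintype.card V)).subset fun p hp =>
    (IsShortest.nodup hpos hp).length_le_card

lemma exists_isShortest (hpos : ∀ a b, 0 < w a b) (h : dist w s t ≠ ⊤) :
    ∃ p, IsShortest w s t p := by
  have := Fintype.ofFinite V
  have hfin : {p | IsPath w s t p ∧ p.Nodup}.Finite :=
    (List.finite_length_le V (Fintype.card V)).subset fun p hp => hp.2.length_le_card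
  obtain ⟨p₀, hp₀⟩ : ∃ p, IsPath w s t p := by
    by_contra! hc
    simp [dist, hc] at h
  obtain ⟨q₀, hq₀, hq₀n, -⟩ := hp₀.exists_nodup_le hpos
  obtain ⟨p, hp, hmin⟩ := Set.exists_min_image _ (pWeight w) hfin ⟨q₀, hq₀, hq₀n⟩
  refine ⟨p, hp.1, le_antisymm (le_iInf₂ fun r hr => ?_) (dist_le_pWeight hp.1)⟩
  obtain ⟨q, hq, hqn, hle⟩ := hr.exists_nodup_le hpos
  exact (hmin q ⟨hq, hqn⟩).trans hle

lemma nsp_eq_zero_iff (hpos : ∀ a b, 0 < w a b) : nsp w s t = 0 ↔ dist w s t = ⊤ := by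
  rw [nsp, Set.ncard_eq_zero (finite_setOf_isShortest hpos), Set.eq_empty_iff_forall_notMem]
  refine ⟨fun h => by_contra fun hd => ?_, fun h p hp => hp.1.pWeight_ne_top (hp.2.trans h)⟩
  obtain ⟨p, hp⟩ := exists_isShortest hpos hd
  exact h p hp

end Simple

section Counting

variable {w : V → V → ℝ≥0∞} {s t u a b : V} {p : List V}

lemma IsShortest.concat_of_mem_dagSet (hp : IsShortest w s a p) (h : (a, b) ∈ dagSet w s) :
    IsShortest w s b (p ++ [b]) := by
  obtain ⟨l, rfl⟩ := hp.1.eq_concat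
  simpa using isShortest_append_cons_iff.2
    ⟨hp, isPath_pair_iff.2 h.1, by simpa using h.2.2⟩

lemma ncard_image_append_tail (hpos : ∀ a b, 0 < w a b) {A : Set (List V)}
    (hA : A ⊆ {p | IsShortest w s u p}) :
    ((fun aq : List V × List V => aq.1 ++ aq.2.tail) '' (A ×ˢ shortestSuffixes w s u t)).ncard =
      A.ncard * (shortestSuffixes w s u t).ncard := by
  rw [Set.InjOn.ncard_image, Set.ncard_prod]
  rintro ⟨a₁, q₁⟩ ⟨ha₁, hq₁⟩ ⟨a₂, q₂⟩ ⟨ha₂, hq₂⟩ heq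
  obtain ⟨l₁, rfl⟩ := (hA ha₁).1.eq_concat
  obtain ⟨l₂, rfl⟩ := (hA ha₂).1.eq_concat
  obtain ⟨m₁, rfl⟩ := hq₁.1.eq_cons
  obtain ⟨m₂, rfl⟩ := hq₂.1.eq_cons
  have hnd := (isShortest_append_cons_iff.2 ⟨hA ha₁, hq₁⟩).nodup hpos
  rw [List.nodup_middle, List.nodup_cons, List.mem_append, not_or] at hnd
  simp only [List.tail_cons, List.append_assoc, List.singleton_append] at heq
  obtain ⟨rfl, -, rfl⟩ := (List.append_cons_inj_of_notMem hnd.1.1 hnd.1.2).1 heq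
  rfl

lemma nspVia_eq_mul (hpos : ∀ a b, 0 < w a b) :
    nspVia w s t u = nsp w s u * (shortestSuffixes w s u t).ncard := by
  rw [nspVia, nsp, ← ncard_image_append_tail hpos subset_rfl]
  congr 1
  ext p
  constructor
  · rintro ⟨hp, hu⟩
    obtain ⟨l, m, rfl⟩ := List.append_of_mem hu
    exact ⟨(l ++ [u], u :: m), isShortest_append_cons_iff.1 hp, by simp⟩
  · rintro ⟨⟨a, q⟩, ⟨ha, hq⟩, rfl⟩
    obtain ⟨l, rfl⟩ := ha.1.eq_concat
    obtain ⟨m, rfl⟩ := hq.1.eq_cons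
    simpa using isShortest_append_cons_iff.2 ⟨ha, hq⟩

lemma nspViaEdge_eq_mul (hpos : ∀ a b, 0 < w a b) (h : (a, b) ∈ dagSet w s) :
    nspViaEdge w s t a b = nsp w s a * (shortestSuffixes w s b t).ncard := by
  have hA : (· ++ [b]) '' {p | IsShortest w s a p} ⊆ {p | IsShortest w s b p} := by
    rintro _ ⟨p, hp, rfl⟩
    exact hp.concat_of_mem_dagSet h
  rw [nspViaEdge, nsp,
    ← (List.append_left_injective [b]).injOn.ncard_image (s := {p | IsShortest w s a p}),
    ← ncard_image_append_tail hpos hA]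
  congr 1
  ext p
  constructor
  · rintro ⟨hp, hab⟩
    obtain ⟨l, m, rfl⟩ := edgeOn_iff.1 hab
    have hp' : IsShortest w s t ((l ++ [a]) ++ b :: m) := by simpa using hp
    exact ⟨(l ++ [a] ++ [b], b :: m),
      ⟨⟨l ++ [a], (isShortest_append_cons_iff.1 hp).1, rfl⟩, (isShortest_append_cons_iff.1 hp').2⟩,
      by simp⟩
  · rintro ⟨⟨_, q⟩, ⟨⟨p, hp, rfl⟩, hq⟩, rfl⟩
    obtain ⟨l, rfl⟩ := hp.1.eq_concat
    obtain ⟨m, rfl⟩ := hq.1.eq_cons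
    refine ⟨?_, edgeOn_iff.2 ⟨l, m, by simp⟩⟩
    simpa using isShortest_append_cons_iff.2 ⟨hp.concat_of_mem_dagSet h, hq⟩

lemma nspViaEdge_eq_zero (h : (a, b) ∉ dagSet w s) : nspViaEdge w s t a b = 0 := by
  rw [nspViaEdge, ← Set.ncard_empty (List V)]
  exact congrArg _ (Set.eq_empty_of_forall_notMem fun p hp => h (mem_dagSet_of_edgeOn hp.1 hp.2))

lemma nspVia_eq_sum_nspViaEdge [Fintype V] (hpos : ∀ a b, 0 < w a b) (hat : a ≠ t) :
    nspVia w s t a = ∑ b, nspViaEdge w s t a b := by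
  have hunion : {p | IsShortest w s t p ∧ a ∈ p} =
      ⋃ b, {p | IsShortest w s t p ∧ edgeOn p a b} := by
    ext p
    simp only [Set.mem_ofPred_eq, Set.mem_iUnion]
    constructor
    · rintro ⟨hp, ha⟩
      obtain ⟨l, _ | ⟨b, m⟩, rfl⟩ := List.append_of_mem ha
      · exact absurd (by simpa using hp.1.2.2.1) hat
      · exact ⟨b, hp, edgeOn_iff.2 ⟨l, m, rfl⟩⟩
    · rintro ⟨b, hp, hab⟩
      obtain ⟨l, m, rfl⟩ := edgeOn_iff.1 hab
      exact ⟨hp, by simp⟩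
  rw [nspVia, hunion, Set.ncard_iUnion_of_finite, finsum_eq_sum_of_fintype]
  · rfl
  · exact fun b => (finite_setOf_isShortest hpos).subset fun p hp => hp.1
  · intro b c hbc
    refine Set.disjoint_left.2 fun p ⟨hp, hb⟩ hc => hbc ?_
    obtain ⟨l, m, rfl⟩ := edgeOn_iff.1 hb
    obtain ⟨l', m', heq⟩ := edgeOn_iff.1 hc.2
    have hnd := hp.nodup hpos
    rw [List.nodup_middle, List.nodup_cons, List.mem_append, not_or] at hnd
    exact (List.cons.inj ((List.append_cons_inj_of_notMem hnd.1.1 hnd.1.2).1 heq).2.2).1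

lemma nspVia_self : nspVia w s t t = nsp w s t := by
  rw [nspVia, nsp]
  congr 1
  ext p
  refine and_iff_left_of_imp fun hp => ?_
  obtain ⟨l, rfl⟩ := hp.1.eq_concat
  simp

lemma nspVia_eq_zero_of_dist_lt (h : dist w s t < dist w s u) : nspVia w s t u = 0 := by
  rw [nspVia, ← Set.ncard_empty (List V)]
  exact congrArg _ (Set.eq_empty_of_forall_notMem fun p hp => (hp.1.dist_le_of_mem hp.2).not_gt h)

end Counting

section Dependency

open Classical

variable [Fintype V] {w : V → V → ℝ≥0∞} {s x u : V}

lemma dep_eq_zero_of_nsp_eq_zero (hpos : ∀ a b, 0 < w a b) (h : nsp w s x = 0) :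
    dep w s x = 0 :=
  Finset.sum_eq_zero fun t _ => by simp [nspVia_eq_mul hpos, h]

lemma one_add_dep_eq_sum (hpos : ∀ a b, 0 < w a b) (hus : u ≠ s) (hu : dist w s u ≠ ⊤) :
    1 + dep w s u = ∑ t, if t ≠ s then (nspVia w s t u : ℝ) / nsp w s t else 0 := by
  have hσ : (nsp w s u : ℝ) ≠ 0 := by exact_mod_cast mt (nsp_eq_zero_iff hpos).1 hu
  have hsplit : ∀ t, (if t ≠ s then (nspVia w s t u : ℝ) / nsp w s t else 0) =
      (if u = t then (nspVia w s t u : ℝ) / nsp w s t else 0) +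
        if t ≠ u ∧ t ≠ s then (nspVia w s t u : ℝ) / nsp w s t else 0 := by
    intro t
    by_cases htu : u = t
    · subst htu; simp [hus]
    · simp [htu, Ne.symm htu]
  rw [Finset.sum_congr rfl fun t _ => hsplit t, Finset.sum_add_distrib, Finset.sum_ite_eq,
    nspVia_self, div_self hσ, dep]
  simp

lemma dep_eq_sum_sum_nspViaEdge (hpos : ∀ a b, 0 < w a b) :
    dep w s x = ∑ u, ∑ t, if t ≠ x ∧ t ≠ s then (nspViaEdge w s t x u : ℝ) / nsp w s t else 0 := by
  rw [dep, Finset.sum_comm]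
  refine Finset.sum_congr rfl fun t _ => ?_
  split_ifs with ht
  · rw [nspVia_eq_sum_nspViaEdge hpos (Ne.symm ht.1), Nat.cast_sum, Finset.sum_div]
  · simp

lemma sum_nspViaEdge_div_nsp (hpos : ∀ a b, 0 < w a b) (h : (x, u) ∈ dagSet w s) :
    ∑ t, (if t ≠ x ∧ t ≠ s then (nspViaEdge w s t x u : ℝ) / nsp w s t else 0) =
      nsp w s x / nsp w s u * (1 + dep w s u) := by
  obtain ⟨hxu, hx, hd⟩ := h
  have hlt : dist w s x < dist w s u := hd ▸ ENNReal.lt_add_right hx (hpos x u).ne'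
  have hu : dist w s u ≠ ⊤ := hd ▸ ENNReal.add_ne_top.2 ⟨hx, hxu⟩
  have hus : u ≠ s := by
    rintro rfl
    simp [dist_self] at hlt
  have hσ : (nsp w s u : ℝ) ≠ 0 := by exact_mod_cast mt (nsp_eq_zero_iff hpos).1 hu
  rw [one_add_dep_eq_sum hpos hus hu, Finset.mul_sum]
  refine Finset.sum_congr rfl fun t _ => ?_
  by_cases htx : t = x
  · subst htx
    simp [nspVia_eq_zero_of_dist_lt hlt]
  · simp only [htx, ne_eq, not_false_eq_true, true_and, mul_ite, mul_zero]
    split_ifs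
    · rfl
    · rw [nspViaEdge_eq_mul hpos ⟨hxu, hx, hd⟩, nspVia_eq_mul hpos]
      push_cast
      field_simp

end Dependency

open Classical in
theorem brandes_recursion_general [Fintype V] (w : V → V → ℝ≥0∞)
    (hpos : ∀ a b, 0 < w a b) (s x : V) :
    dep w s x = ∑ t : V,
      if w x t ≠ ⊤ ∧ dist w s t = dist w s x + w x t then
        ((nsp w s x : ℝ) / (nsp w s t : ℝ)) * (1 + dep w s t)
      else 0 := by
  by_cases hx : dist w s x = ⊤
  · have hσ : nsp w s x = 0 := (nsp_eq_zero_iff hpos).2 hx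
    simp [dep_eq_zero_of_nsp_eq_zero hpos hσ, hσ]
  rw [dep_eq_sum_sum_nspViaEdge hpos]
  refine Finset.sum_congr rfl fun u _ => ?_
  split_ifs with hxu
  · exact sum_nspViaEdge_div_nsp hpos ⟨hxu.1, hx, hxu.2.symm⟩
  · refine Finset.sum_eq_zero fun t _ => ?_
    simp [nspViaEdge_eq_zero fun h => hxu ⟨h.1, h.2.2.symm⟩]

open Classical in
theorem brandes_recursion [Fintype V] (w : V → V → ℝ≥0∞)
    (hpos : ∀ a b, 0 < w a b) (s x : V) (hxs : x ≠ s) :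
    dep w s x = ∑ t : V,
      if w x t ≠ ⊤ ∧ dist w s t = dist w s x + w x t then
        ((nsp w s x : ℝ) / (nsp w s t : ℝ)) * (1 + dep w s t)
      else 0 :=
  brandes_recursion_general w hpos s x

end BC
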